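/- Let $L_1,\dots,L_6$ be six pairwise distinct lines in the projective plane over a field such that no point lies on more than three of the lines. Then there exist at least two distinct points each of which lies on exactly two of the six lines. -/

import Mathlib

open scoped Classical

open Finset Module

theorem even_card_of_forall_even_card_fiber {α β : Type*} [DecidableEq β] (s : Finset α)
    (f : α → β) (h : ∀ b ∈ s.image f, Even #{a ∈ s | f a = b}) : Even #s := by
  rw [card_eq_sum_card_image f s]
  exact even_sum _ h

section Projective

variable {k V : Type*} [DivisionRing k] [AddCommGroup V] [Module k V]

theorem finrank_inf_add_one_of_ne [FiniteDimensional k V] {n : ℕ} (hV : finrank k V = n + 1)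
    {P Q : Submodule k V} (hP : finrank k P = n) (hQ : finrank k Q = n) (hPQ : P ≠ Q) :
    finrank k ↥(P ⊓ Q) + 1 = n := by
  have hlt : P < P ⊔ Q := by
    refine lt_of_le_of_ne le_sup_left fun h => hPQ ?_
    exact (Submodule.eq_of_le_of_finrank_eq (h ▸ le_sup_right) (hQ.trans hP.symm)).symm
  have hsup : finrank k ↥(P ⊔ Q) = n + 1 :=
    le_antisymm (hV ▸ Submodule.finrank_le _) (hP ▸ Submodule.finrank_lt_finrank_of_lt hlt)
  have := Submodule.finrank_sup_add_finrank_inf_eq P Q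
  omega

variable {ι : Type*} {L : ι → Submodule k V}

theorem finrank_inf_eq_one [FiniteDimensional k V] (hV : finrank k V = 3)
    (hdim : ∀ i, finrank k (L i) = 2) (hinj : Function.Injective L) {i j : ι} (hij : i ≠ j) :
    finrank k ↥(L i ⊓ L j) = 1 := by
  have := finrank_inf_add_one_of_ne hV (hdim i) (hdim j) (hinj.ne hij)
  omega

theorem eq_inf_of_le_of_le [FiniteDimensional k V] (hV : finrank k V = 3)
    (hdim : ∀ i, finrank k (L i) = 2) (hinj : Function.Injective L) {p : Submodule k V}
    (hp : finrank k p = 1) {i j : ι} (hij : i ≠ j) (hpi : p ≤ L i) (hpj : p ≤ L j) :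
    p = L i ⊓ L j :=
  Submodule.eq_of_le_of_finrank_eq (le_inf hpi hpj)
    (hp.trans (finrank_inf_eq_one hV hdim hinj hij).symm)

variable [Fintype ι]

variable (L) in
noncomputable def linesThrough (p : Submodule k V) : Finset ι := {i | p ≤ L i}

theorem mem_linesThrough {p : Submodule k V} {i : ι} : i ∈ linesThrough L p ↔ p ≤ L i := by
  simp [linesThrough]

variable [FiniteDimensional k V]

/-- Each of the odd number of other lines meets `L i` in a point, and a point of multiplicity `3`
on `L i` accounts for exactly two of them; so not all these points can have multiplicity `3`. -/
theorem exists_double_point_on_line (hV : finrank k V = 3) (hdim : ∀ i, finrank k (L i) = 2)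
    (hinj : Function.Injective L)
    (hmult : ∀ p : Submodule k V, finrank k p = 1 → #(linesThrough L p) ≤ 3)
    (hι : Even (Fintype.card ι)) (i : ι) :
    ∃ p : Submodule k V, finrank k p = 1 ∧ p ≤ L i ∧ #(linesThrough L p) = 2 := by
  by_contra! hno
  have htriple : ∀ j ≠ i, #(linesThrough L (L i ⊓ L j)) = 3 := by
    intro j hj
    have hpt := finrank_inf_eq_one hV hdim hinj hj.symm
    have hpair : {i, j} ⊆ linesThrough L (L i ⊓ L j) := by
      simp [insert_subset_iff, mem_linesThrough]
    have := card_le_card hpair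
    rw [card_pair hj.symm] at this
    have := hmult _ hpt
    have := hno _ hpt inf_le_left
    omega
  have hfiber : ∀ j ≠ i, {t ∈ univ.erase i | L i ⊓ L t = L i ⊓ L j} =
      (linesThrough L (L i ⊓ L j)).erase i := by
    intro j hj
    ext t
    simp only [mem_filter, mem_erase, mem_univ, and_true, mem_linesThrough]
    refine and_congr_right fun hti => ⟨fun h => h ▸ inf_le_right, fun h => ?_⟩
    exact (eq_inf_of_le_of_le hV hdim hinj (finrank_inf_eq_one hV hdim hinj hj.symm)
      hti.symm inf_le_left h).symm
  have heven : Even #(univ.erase i) := by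
    refine even_card_of_forall_even_card_fiber _ (fun j => L i ⊓ L j) ?_
    simp only [mem_image, mem_erase, mem_univ, and_true]
    rintro _ ⟨j, hj, rfl⟩
    rw [hfiber j hj, card_erase_of_mem (mem_linesThrough.mpr inf_le_left), htriple j hj]
    exact even_two
  rw [← card_univ, ← card_erase_add_one (mem_univ i), Nat.even_add_one] at hι
  exact hι heven

theorem exists_two_double_points (hV : finrank k V = 3) (hdim : ∀ i, finrank k (L i) = 2)
    (hinj : Function.Injective L)
    (hmult : ∀ p : Submodule k V, finrank k p = 1 → #(linesThrough L p) ≤ 3)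
    (hι : Even (Fintype.card ι)) (hι₂ : 2 < Fintype.card ι) :
    ∃ p q : Submodule k V, p ≠ q ∧ finrank k p = 1 ∧ finrank k q = 1 ∧
      #(linesThrough L p) = 2 ∧ #(linesThrough L q) = 2 := by
  obtain ⟨i₀⟩ : Nonempty ι := Fintype.card_pos_iff.mp (by omega)
  obtain ⟨p, hp, -, hp2⟩ := exists_double_point_on_line hV hdim hinj hmult hι i₀
  obtain ⟨i, hi⟩ : ∃ i, ¬p ≤ L i := by
    by_contra! hall
    have : linesThrough L p = univ := eq_univ_of_forall fun i => mem_linesThrough.mpr (hall i)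
    rw [this, card_univ] at hp2
    omega
  obtain ⟨q, hq, hqi, hq2⟩ := exists_double_point_on_line hV hdim hinj hmult hι i
  exact ⟨p, q, fun h => hi (h ▸ hqi), hp, hq, hp2, hq2⟩

end Projective

theorem stmt_3 {k : Type*} [Field k]
    (L : Fin 6 → Submodule k (Fin 3 → k))
    (hdim : ∀ i, Module.finrank k (L i) = 2)
    (hinj : Function.Injective L)
    (hmult : ∀ p : Submodule k (Fin 3 → k), Module.finrank k p = 1 →
      (Finset.univ.filter (fun i => p ≤ L i)).card ≤ 3) :
    ∃ p q : Submodule k (Fin 3 → k), p ≠ q ∧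
      Module.finrank k p = 1 ∧ Module.finrank k q = 1 ∧
      (Finset.univ.filter (fun i => p ≤ L i)).card = 2 ∧
      (Finset.univ.filter (fun i => q ≤ L i)).card = 2 :=
  exists_two_double_points (finrank_fin_fun k) hdim hinj hmult (by decide) (by decide)
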